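/- arXiv:1604.04262 — 3 statements merged into one kernel-verified Lean document; each statement's English description precedes it below -/
import Mathlib

section
/- For any smooth vector fields ω, M : ℝ × ℝ³ → ℝ³ (possibly depending on t), u : ℝ³ → ℝ³ and smooth scalar F : ℝ × ℝ³ → ℝ, defining Δ⃗ = ∂_t ω + ∇×M and Δ₄ = ∇·ω, the identity ∂_t(ω·∇F) + ∇·(M×∇F - (∂_t F)ω) = ∇F·Δ⃗ - (∂_t F)Δ₄ holds identically. -/
/-- Time derivative of a scalar function on `ℝ × ℝ³`. -/
noncomputable def dts (f : ℝ × (Fin 3 → ℝ) → ℝ) (p : ℝ × (Fin 3 → ℝ)) : ℝ :=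
  fderiv ℝ f p (1, 0)

/-- Spatial partial derivative `∂ᵢ` of a scalar function on `ℝ × ℝ³`. -/
noncomputable def dxs (i : Fin 3) (f : ℝ × (Fin 3 → ℝ) → ℝ) (p : ℝ × (Fin 3 → ℝ)) : ℝ :=
  fderiv ℝ f p (0, Pi.single i 1)

/-- Componentwise time derivative of a time-dependent vector field on `ℝ³`. -/
noncomputable def dtv (F : ℝ × (Fin 3 → ℝ) → (Fin 3 → ℝ)) (p : ℝ × (Fin 3 → ℝ)) :
    Fin 3 → ℝ :=
  fun i => dts (fun q => F q i) p

/-- Spatial divergence of a time-dependent vector field on `ℝ³`. -/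
noncomputable def div3 (F : ℝ × (Fin 3 → ℝ) → (Fin 3 → ℝ)) (p : ℝ × (Fin 3 → ℝ)) : ℝ :=
  ∑ i, dxs i (fun q => F q i) p

/-- Spatial curl of a time-dependent vector field on `ℝ³`. -/
noncomputable def curl3 (F : ℝ × (Fin 3 → ℝ) → (Fin 3 → ℝ)) (p : ℝ × (Fin 3 → ℝ)) :
    Fin 3 → ℝ :=
  ![dxs 1 (fun q => F q 2) p - dxs 2 (fun q => F q 1) p,
    dxs 2 (fun q => F q 0) p - dxs 0 (fun q => F q 2) p,
    dxs 0 (fun q => F q 1) p - dxs 1 (fun q => F q 0) p]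

/-- Spatial gradient of a scalar function on `ℝ × ℝ³`. -/
noncomputable def grad3 (f : ℝ × (Fin 3 → ℝ) → ℝ) (p : ℝ × (Fin 3 → ℝ)) : Fin 3 → ℝ :=
  fun i => dxs i f p

/-- Dot product on `ℝ³`. -/
def dot3 (a b : Fin 3 → ℝ) : ℝ := ∑ i, a i * b i

/-- Cross product on `ℝ³`. -/
def cross3 (a b : Fin 3 → ℝ) : Fin 3 → ℝ :=
  ![a 1 * b 2 - a 2 * b 1, a 2 * b 0 - a 0 * b 2, a 0 * b 1 - a 1 * b 0]

section helpers
variable {f g : ℝ × (Fin 3 → ℝ) → ℝ} {p : ℝ × (Fin 3 → ℝ)} {i j : Fin 3}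

lemma dts_add (hf : DifferentiableAt ℝ f p) (hg : DifferentiableAt ℝ g p) :
    dts (fun q => f q + g q) p = dts f p + dts g p := by
  simp [dts, fderiv_fun_add hf hg]

lemma dts_mul (hf : DifferentiableAt ℝ f p) (hg : DifferentiableAt ℝ g p) :
    dts (fun q => f q * g q) p = f p * dts g p + g p * dts f p := by
  simp [dts, fderiv_fun_mul hf hg]

lemma dxs_sub (hf : DifferentiableAt ℝ f p) (hg : DifferentiableAt ℝ g p) :
    dxs i (fun q => f q - g q) p = dxs i f p - dxs i g p := by
  simp [dxs, fderiv_fun_sub hf hg]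

lemma dxs_mul (hf : DifferentiableAt ℝ f p) (hg : DifferentiableAt ℝ g p) :
    dxs i (fun q => f q * g q) p = f p * dxs i g p + g p * dxs i f p := by
  simp [dxs, fderiv_fun_mul hf hg]

lemma contDiff_dts (hf : ContDiff ℝ (⊤ : ℕ∞) f) : ContDiff ℝ (⊤ : ℕ∞) (dts f) :=
  (hf.fderiv_right (m := (⊤ : ℕ∞)) (by simp)).clm_apply contDiff_const

lemma contDiff_dxs (hf : ContDiff ℝ (⊤ : ℕ∞) f) : ContDiff ℝ (⊤ : ℕ∞) (dxs i f) :=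
  (hf.fderiv_right (m := (⊤ : ℕ∞)) (by simp)).clm_apply contDiff_const

lemma fderiv_symm (hf : ContDiff ℝ (⊤ : ℕ∞) f) (v w : ℝ × (Fin 3 → ℝ)) :
    fderiv ℝ (fun q => fderiv ℝ f q v) p w = fderiv ℝ (fun q => fderiv ℝ f q w) p v := by
  have hd : Differentiable ℝ f := hf.differentiable (by simp)
  have hd2 : DifferentiableAt ℝ (fderiv ℝ f) p :=
    ((hf.fderiv_right (m := (⊤ : ℕ∞)) (by simp)).differentiable (by simp)) p
  have hs := second_derivative_symmetric (f' := fderiv ℝ f)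
    (fun y => (hd y).hasFDerivAt) hd2.hasFDerivAt v w
  rw [fderiv_clm_apply hd2 (differentiableAt_const v),
    fderiv_clm_apply hd2 (differentiableAt_const w)]
  simp [hs]

lemma dxs_dts (hf : ContDiff ℝ (⊤ : ℕ∞) f) : dxs i (dts f) p = dts (dxs i f) p :=
  fderiv_symm hf _ _

lemma dxs_dxs (hf : ContDiff ℝ (⊤ : ℕ∞) f) : dxs i (dxs j f) p = dxs j (dxs i f) p :=
  fderiv_symm hf _ _

end helpers


/-- Cheviakov–Oberlack infinite family of vorticity-type conservation laws:
with `Δ⃗ = ∂_t ω + ∇×M` and `Δ₄ = ∇·ω`,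
`∂_t(ω·∇F) + ∇·(M×∇F - (∂_t F)ω) = ∇F·Δ⃗ - (∂_t F)Δ₄` identically. -/

theorem stmt_7 (ω u M : ℝ × (Fin 3 → ℝ) → (Fin 3 → ℝ))
    (hω : ContDiff ℝ (⊤ : ℕ∞) ω) (hu : ContDiff ℝ (⊤ : ℕ∞) u) (hM : ContDiff ℝ (⊤ : ℕ∞) M)
    (F : ℝ × (Fin 3 → ℝ) → ℝ) (hF : ContDiff ℝ (⊤ : ℕ∞) F)
    (Δvec : ℝ × (Fin 3 → ℝ) → (Fin 3 → ℝ))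
    (hΔvec : Δvec = fun p => dtv ω p + curl3 M p)
    (Δ4 : ℝ × (Fin 3 → ℝ) → ℝ) (hΔ4 : Δ4 = fun p => div3 ω p) :
    ∀ p : ℝ × (Fin 3 → ℝ),
      dts (fun q => dot3 (ω q) (grad3 F q)) p +
        div3 (fun q => cross3 (M q) (grad3 F q) - dts F q • ω q) p =
      dot3 (grad3 F p) (Δvec p) - dts F p * Δ4 p := by
  subst hΔvec hΔ4
  intro p
  have hωc : ∀ i, ContDiff ℝ (⊤ : ℕ∞) (fun q => ω q i) := fun i => (contDiff_pi.mp hω) i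
  have hMc : ∀ i, ContDiff ℝ (⊤ : ℕ∞) (fun q => M q i) := fun i => (contDiff_pi.mp hM) i
  have hdx : ∀ i, ContDiff ℝ (⊤ : ℕ∞) (dxs i F) := fun i => contDiff_dxs hF
  have hdt : ContDiff ℝ (⊤ : ℕ∞) (dts F) := contDiff_dts hF
  have D : ∀ {f : ℝ × (Fin 3 → ℝ) → ℝ}, ContDiff ℝ (⊤ : ℕ∞) f → DifferentiableAt ℝ f p :=
    fun h => (h.differentiable (by simp)) p
  simp only [div3, dot3, dtv, grad3, curl3, cross3, Fin.sum_univ_three, Pi.add_apply,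
    Pi.sub_apply, Pi.smul_apply, smul_eq_mul, Matrix.cons_val_zero, Matrix.cons_val_one,
    Matrix.head_cons, Matrix.cons_val_two, Matrix.tail_cons]
  rw [dts_add (D (((hωc 0).mul (hdx 0)).add ((hωc 1).mul (hdx 1)))) (D ((hωc 2).mul (hdx 2))),
      dts_add (D ((hωc 0).mul (hdx 0))) (D ((hωc 1).mul (hdx 1))),
      dts_mul (D (hωc 0)) (D (hdx 0)), dts_mul (D (hωc 1)) (D (hdx 1)),
      dts_mul (D (hωc 2)) (D (hdx 2)),
      dxs_sub (D (((hMc 1).mul (hdx 2)).sub ((hMc 2).mul (hdx 1)))) (D (hdt.mul (hωc 0))),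
      dxs_sub (D ((hMc 1).mul (hdx 2))) (D ((hMc 2).mul (hdx 1))),
      dxs_sub (D (((hMc 2).mul (hdx 0)).sub ((hMc 0).mul (hdx 2)))) (D (hdt.mul (hωc 1))),
      dxs_sub (D ((hMc 2).mul (hdx 0))) (D ((hMc 0).mul (hdx 2))),
      dxs_sub (D (((hMc 0).mul (hdx 1)).sub ((hMc 1).mul (hdx 0)))) (D (hdt.mul (hωc 2))),
      dxs_sub (D ((hMc 0).mul (hdx 1))) (D ((hMc 1).mul (hdx 0))),
      dxs_mul (D (hMc 1)) (D (hdx 2)), dxs_mul (D (hMc 2)) (D (hdx 1)),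
      dxs_mul (D (hMc 2)) (D (hdx 0)), dxs_mul (D (hMc 0)) (D (hdx 2)),
      dxs_mul (D (hMc 0)) (D (hdx 1)), dxs_mul (D (hMc 1)) (D (hdx 0)),
      dxs_mul (D hdt) (D (hωc 0)), dxs_mul (D hdt) (D (hωc 1)), dxs_mul (D hdt) (D (hωc 2))]
  simp only [dxs_dts hF]
  have s1 : dxs 1 (dxs 0 F) p = dxs 0 (dxs 1 F) p := dxs_dxs hF
  have s2 : dxs 2 (dxs 0 F) p = dxs 0 (dxs 2 F) p := dxs_dxs hF
  have s3 : dxs 2 (dxs 1 F) p = dxs 1 (dxs 2 F) p := dxs_dxs hF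
  rw [s1, s2, s3]
  ring
end

section
/- Let u : ℝ³ → ℝ (with variables t,x,y) be smooth and Δ = 2u_{xt} + u_x u_{xx} - u_{yy} (transonic gas flow). Then with α = -u_x, M^t = -u_x², M^x = u_x u_t + u_x³/6 - u_y²/2 + α(u_t + u_x²/2), M^y = -α u_y, the conservation law D_t M^t + D_x M^x + D_y M^y = α·Δ holds identically. -/
/-- Partial derivative in `t` on `ℝ × ℝ × ℝ` (coordinates `(t,x,y)`). -/
noncomputable def Dt (f : ℝ × ℝ × ℝ → ℝ) (p : ℝ × ℝ × ℝ) : ℝ := fderiv ℝ f p (1, 0, 0)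

/-- Partial derivative in `x` on `ℝ × ℝ × ℝ`. -/
noncomputable def Dx (f : ℝ × ℝ × ℝ → ℝ) (p : ℝ × ℝ × ℝ) : ℝ := fderiv ℝ f p (0, 1, 0)

/-- Partial derivative in `y` on `ℝ × ℝ × ℝ`. -/
noncomputable def Dy (f : ℝ × ℝ × ℝ → ℝ) (p : ℝ × ℝ × ℝ) : ℝ := fderiv ℝ f p (0, 0, 1)

section Aux

variable {u f g : ℝ × ℝ × ℝ → ℝ} {p : ℝ × ℝ × ℝ} {v w : ℝ × ℝ × ℝ}

lemma aux_smooth_pd (hu : ContDiff ℝ (⊤ : ℕ∞) u) (v : ℝ × ℝ × ℝ) :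
    ContDiff ℝ (⊤ : ℕ∞) (fun q => fderiv ℝ u q v) := by
  have h1 : ContDiff ℝ (⊤ : ℕ∞) (fderiv ℝ u) := hu.fderiv_right (by simp)
  exact (ContinuousLinearMap.apply ℝ ℝ v).contDiff.comp h1

lemma aux_pd_apply (hu : ContDiff ℝ (⊤ : ℕ∞) u) :
    fderiv ℝ (fun q => fderiv ℝ u q v) p w = fderiv ℝ (fderiv ℝ u) p w v := by
  have h1 : ContDiff ℝ (⊤ : ℕ∞) (fderiv ℝ u) := hu.fderiv_right (by simp)
  rw [fderiv_clm_apply (h1.differentiable (by simp)).differentiableAt (differentiableAt_const v)]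
  simp

lemma aux_pd_comm (hu : ContDiff ℝ (⊤ : ℕ∞) u) :
    fderiv ℝ (fun q => fderiv ℝ u q v) p w = fderiv ℝ (fun q => fderiv ℝ u q w) p v := by
  rw [aux_pd_apply hu, aux_pd_apply hu]
  exact (hu.contDiffAt.isSymmSndFDerivAt (by rw [minSmoothness_of_isRCLikeNormedField]; exact WithTop.coe_le_coe.2 (le_top : (2 : ℕ∞) ≤ ⊤))).eq w v

lemma aux_pd_mul (hf : ContDiff ℝ (⊤ : ℕ∞) f) (hg : ContDiff ℝ (⊤ : ℕ∞) g) :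
    fderiv ℝ (fun q => f q * g q) p v = fderiv ℝ f p v * g p + f p * fderiv ℝ g p v := by
  rw [fderiv_fun_mul (hf.differentiable (by simp)).differentiableAt (hg.differentiable (by simp)).differentiableAt]
  simp [mul_comm]
  ring

lemma aux_pd_add (hf : ContDiff ℝ (⊤ : ℕ∞) f) (hg : ContDiff ℝ (⊤ : ℕ∞) g) :
    fderiv ℝ (fun q => f q + g q) p v = fderiv ℝ f p v + fderiv ℝ g p v := by
  rw [fderiv_fun_add (hf.differentiable (by simp)).differentiableAt (hg.differentiable (by simp)).differentiableAt]; simp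

lemma aux_pd_neg : fderiv ℝ (fun q => -(f q)) p v = -(fderiv ℝ f p v) := by
  rw [fderiv_fun_neg]; simp

lemma aux_pd_cmul (hf : ContDiff ℝ (⊤ : ℕ∞) f) (c : ℝ) : fderiv ℝ (fun q => c * f q) p v = c * fderiv ℝ f p v := by
  rw [fderiv_const_mul ((hf.differentiable (by simp)).differentiableAt) c]; simp

end Aux

/-- Conservation law of the non-stationary transonic gas flow equation
`Δ = 2u_{xt} + u_x u_{xx} - u_{yy}` with `α = -u_x`:
`D_t(-u_x²) + D_x(u_x u_t + u_x³/6 - u_y²/2 + α(u_t + u_x²/2)) + D_y(-α u_y) = α·Δ`. -/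
theorem stmt_13 (u : ℝ × ℝ × ℝ → ℝ) (hu : ContDiff ℝ (⊤ : ℕ∞) u)
    (Δ : ℝ × ℝ × ℝ → ℝ)
    (hΔ : Δ = fun p => 2 * Dt (Dx u) p + Dx u p * Dx (Dx u) p - Dy (Dy u) p)
    (α : ℝ × ℝ × ℝ → ℝ) (hα : α = fun p => -(Dx u p))
    (Mt : ℝ × ℝ × ℝ → ℝ) (hMt : Mt = fun p => -(Dx u p) ^ 2)
    (Mx : ℝ × ℝ × ℝ → ℝ)
    (hMx : Mx = fun p => Dx u p * Dt u p + (Dx u p) ^ 3 / 6 - (Dy u p) ^ 2 / 2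
      + α p * (Dt u p + (Dx u p) ^ 2 / 2))
    (My : ℝ × ℝ × ℝ → ℝ) (hMy : My = fun p => -(α p * Dy u p)) :
    ∀ p : ℝ × ℝ × ℝ, Dt Mt p + Dx Mx p + Dy My p = α p * Δ p := by
  intro p
  have hux : ContDiff ℝ (⊤ : ℕ∞) (Dx u) := aux_smooth_pd hu _
  have huy : ContDiff ℝ (⊤ : ℕ∞) (Dy u) := aux_smooth_pd hu _
  have hux2 : ContDiff ℝ (⊤ : ℕ∞) (fun q => Dx u q * Dx u q) := hux.mul hux
  have hMt' : Mt = fun q => -(Dx u q * Dx u q) := by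
    rw [hMt]; funext q; ring
  have hMx' : Mx = fun q => (-(1/3 : ℝ)) * (Dx u q * (Dx u q * Dx u q))
      + (-(1/2 : ℝ)) * (Dy u q * Dy u q) := by
    rw [hMx, hα]; funext q; ring
  have hMy' : My = fun q => Dx u q * Dy u q := by
    rw [hMy, hα]; funext q; ring
  have e1 : Dt Mt p = -(Dt (Dx u) p * Dx u p + Dx u p * Dt (Dx u) p) := by
    rw [hMt']
    show fderiv ℝ (fun q => -(Dx u q * Dx u q)) p _ = _
    rw [aux_pd_neg, aux_pd_mul hux hux]; rfl
  have e2 : Dx Mx p = (-(1/3 : ℝ)) * (Dx (Dx u) p * (Dx u p * Dx u p)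
        + Dx u p * (Dx (Dx u) p * Dx u p + Dx u p * Dx (Dx u) p))
      + (-(1/2 : ℝ)) * (Dx (Dy u) p * Dy u p + Dy u p * Dx (Dy u) p) := by
    rw [hMx']
    show fderiv ℝ _ p _ = _
    rw [aux_pd_add ((contDiff_const.mul (hux.mul hux2)))
        ((contDiff_const.mul (huy.mul huy))),
      aux_pd_cmul (hux.mul hux2) _, aux_pd_cmul (huy.mul huy) _, aux_pd_mul hux hux2, aux_pd_mul hux hux,
      aux_pd_mul huy huy]; rfl
  have e3 : Dy My p = Dy (Dx u) p * Dy u p + Dx u p * Dy (Dy u) p := by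
    rw [hMy']
    show fderiv ℝ _ p _ = _
    rw [aux_pd_mul hux huy]; rfl
  have comm : Dx (Dy u) p = Dy (Dx u) p := aux_pd_comm hu
  rw [e1, e2, e3, comm, hΔ, hα]
  ring
end

section
/- Let φ : ℝ⁴ → ℂ and A : ℝ⁴ → ℝ⁴ be smooth, and θ : ℝ⁴ → ℝ smooth. With F_{μν} = ∂_μ A_ν - ∂_ν A_μ and the fluxes M_μ = θ[i(φ̄ ∂_μ φ - φ ∂_μ φ̄) + 2A_μ|φ|²] + (∂^ν θ)F_{μν}, on solutions of the scalar electrodynamics field equations ∂^ν F_{μν} = i(φ̄ ∂_μ φ - φ ∂_μ φ̄) + 2A_μ|φ|² the identity M_μ = ∂^ν(θ F_{μν}) holds, and hence ∂^μ M_μ = 0 on solutions, since ∂^μ ∂^ν (θ F_{μν}) = 0 by antisymmetry of F. -/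
open Complex

/-- Partial derivative `∂_μ` of a complex-valued function on `ℝ⁴`. -/
noncomputable def pdC (μ : Fin 4) (f : (Fin 4 → ℝ) → ℂ) (x : Fin 4 → ℝ) : ℂ :=
  fderiv ℝ f x (Pi.single μ 1)

/-- Partial derivative `∂_μ` of a real-valued function on `ℝ⁴`. -/
noncomputable def pdR (μ : Fin 4) (f : (Fin 4 → ℝ) → ℝ) (x : Fin 4 → ℝ) : ℝ :=
  fderiv ℝ f x (Pi.single μ 1)

/-- Field strength `F_{μν} = ∂_μ A_ν - ∂_ν A_μ`. -/
noncomputable def Fstr (A : (Fin 4 → ℝ) → Fin 4 → ℝ) (x : Fin 4 → ℝ) (μ ν : Fin 4) : ℝ :=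
  pdR μ (fun y => A y ν) x - pdR ν (fun y => A y μ) x

/-- Gauge flux `M_μ = θ[i(φ̄ ∂_μ φ - φ ∂_μ φ̄) + 2A_μ|φ|²] + (∂^ν θ)F_{μν}`
of scalar electrodynamics (Euclidean metric, so indices are raised trivially). -/
noncomputable def Mflux (φ : (Fin 4 → ℝ) → ℂ) (A : (Fin 4 → ℝ) → Fin 4 → ℝ)
    (θ : (Fin 4 → ℝ) → ℝ) (μ : Fin 4) (x : Fin 4 → ℝ) : ℂ :=
  (θ x : ℂ) * (Complex.I * ((starRingEnd ℂ) (φ x) * pdC μ φ x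
      - φ x * pdC μ (fun y => (starRingEnd ℂ) (φ y)) x)
    + 2 * (A x μ : ℂ) * ((‖φ x‖) ^ 2 : ℝ))
  + ∑ ν, ((pdR ν θ x * Fstr A x μ ν : ℝ) : ℂ)

lemma contDiff_pdR {f : (Fin 4 → ℝ) → ℝ} (hf : ContDiff ℝ (⊤ : ℕ∞) f) (ν : Fin 4) :
    ContDiff ℝ (⊤ : ℕ∞) (pdR ν f) :=
  (hf.fderiv_right (by simp)).clm_apply contDiff_const

lemma pdR_mul {f g : (Fin 4 → ℝ) → ℝ} {x : Fin 4 → ℝ}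
    (hf : DifferentiableAt ℝ f x) (hg : DifferentiableAt ℝ g x) (ν : Fin 4) :
    pdR ν (fun y => f y * g y) x = pdR ν f x * g x + f x * pdR ν g x := by
  simp only [pdR, fderiv_fun_mul hf hg, ContinuousLinearMap.add_apply,
    ContinuousLinearMap.smul_apply, smul_eq_mul]
  ring

lemma pdR_neg (f : (Fin 4 → ℝ) → ℝ) (μ : Fin 4) (x : Fin 4 → ℝ) :
    pdR μ (fun y => -f y) x = -pdR μ f x := by
  simp [pdR, fderiv_neg]

lemma pdR_comm {f : (Fin 4 → ℝ) → ℝ} (hf : ContDiff ℝ (⊤ : ℕ∞) f) (μ ν : Fin 4) (x : Fin 4 → ℝ) :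
    pdR μ (pdR ν f) x = pdR ν (pdR μ f) x := by
  have hder : ∀ y, HasFDerivAt f (fderiv ℝ f y) y := fun y =>
    (hf.differentiable (by simp) y).hasFDerivAt
  have hf' : ContDiff ℝ (⊤ : ℕ∞) (fderiv ℝ f) := hf.fderiv_right (by simp)
  have h2 : HasFDerivAt (fderiv ℝ f) (fderiv ℝ (fderiv ℝ f) x) x :=
    (hf'.differentiable (by simp) x).hasFDerivAt
  have hsym := second_derivative_symmetric hder h2
  have key : ∀ (v w : Fin 4 → ℝ),
      fderiv ℝ (fun y => fderiv ℝ f y v) x w = fderiv ℝ (fderiv ℝ f) x w v := by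
    intro v w
    rw [fderiv_clm_apply (hf'.differentiable (by simp) x) (differentiableAt_const v)]
    simp
  show fderiv ℝ (fun y => fderiv ℝ f y (Pi.single ν 1)) x (Pi.single μ 1)
    = fderiv ℝ (fun y => fderiv ℝ f y (Pi.single μ 1)) x (Pi.single ν 1)
  rw [key, key, hsym]

lemma pdC_ofReal {g : (Fin 4 → ℝ) → ℝ} {x : Fin 4 → ℝ}
    (hg : DifferentiableAt ℝ g x) (μ : Fin 4) :
    pdC μ (fun y => ((g y : ℝ) : ℂ)) x = ((pdR μ g x : ℝ) : ℂ) := by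
  have : HasFDerivAt (fun y => ((g y : ℝ) : ℂ))
      (Complex.ofRealCLM.comp (fderiv ℝ g x)) x :=
    Complex.ofRealCLM.hasFDerivAt.comp x hg.hasFDerivAt
  simp [pdC, pdR, this.fderiv]

/-- On solutions of the scalar electrodynamics field equations
`∂^ν F_{μν} = i(φ̄ ∂_μ φ - φ ∂_μ φ̄) + 2A_μ|φ|²`, the gauge flux satisfies
`M_μ = ∂^ν(θ F_{μν})`, and hence `∂^μ M_μ = 0`. -/
theorem stmt_14 (φ : (Fin 4 → ℝ) → ℂ) (A : (Fin 4 → ℝ) → Fin 4 → ℝ)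
    (θ : (Fin 4 → ℝ) → ℝ)
    (hφ : ContDiff ℝ (⊤ : ℕ∞) φ) (hA : ContDiff ℝ (⊤ : ℕ∞) A) (hθ : ContDiff ℝ (⊤ : ℕ∞) θ)
    (heq : ∀ x μ, ((∑ ν, pdR ν (fun y => Fstr A y μ ν) x : ℝ) : ℂ) =
      Complex.I * ((starRingEnd ℂ) (φ x) * pdC μ φ x
        - φ x * pdC μ (fun y => (starRingEnd ℂ) (φ y)) x)
      + 2 * (A x μ : ℂ) * ((‖φ x‖) ^ 2 : ℝ)) :
    (∀ x μ, Mflux φ A θ μ x =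
        ((∑ ν, pdR ν (fun y => θ y * Fstr A y μ ν) x : ℝ) : ℂ)) ∧
    (∀ x, ∑ μ, pdC μ (Mflux φ A θ μ) x = 0) := by
  -- smoothness of components
  have hAc : ∀ ν : Fin 4, ContDiff ℝ (⊤ : ℕ∞) (fun y => A y ν) := fun ν =>
    (ContinuousLinearMap.proj ν : (Fin 4 → ℝ) →L[ℝ] ℝ).contDiff.comp hA
  have hF : ∀ μ ν : Fin 4, ContDiff ℝ (⊤ : ℕ∞) (fun y => Fstr A y μ ν) := fun μ ν =>
    (contDiff_pdR (hAc ν) μ).sub (contDiff_pdR (hAc μ) ν)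
  have hg : ∀ μ ν : Fin 4, ContDiff ℝ (⊤ : ℕ∞) (fun y => θ y * Fstr A y μ ν) := fun μ ν =>
    hθ.mul (hF μ ν)
  -- real product-rule identity
  have hRe : ∀ (x : Fin 4 → ℝ) (μ : Fin 4),
      (∑ ν, pdR ν (fun y => θ y * Fstr A y μ ν) x)
        = θ x * (∑ ν, pdR ν (fun y => Fstr A y μ ν) x)
          + ∑ ν, pdR ν θ x * Fstr A x μ ν := by
    intro x μ
    rw [Finset.mul_sum, ← Finset.sum_add_distrib]
    refine Finset.sum_congr rfl fun ν _ => ?_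
    rw [pdR_mul (hθ.differentiable (by simp) x) ((hF μ ν).differentiable (by simp) x) ν]
    ring
  have part1 : ∀ x μ, Mflux φ A θ μ x =
      ((∑ ν, pdR ν (fun y => θ y * Fstr A y μ ν) x : ℝ) : ℂ) := by
    intro x μ
    simp only [Mflux]
    rw [← heq x μ, hRe x μ]
    push_cast
    ring
  refine ⟨part1, fun x => ?_⟩
  -- rewrite each Mflux as a real-valued function
  have hMfun : ∀ μ, Mflux φ A θ μ =
      fun y => ((∑ ν, pdR ν (fun z => θ z * Fstr A z μ ν) y : ℝ) : ℂ) :=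
    fun μ => funext fun y => part1 y μ
  have hs : ∀ μ : Fin 4, ContDiff ℝ (⊤ : ℕ∞) (fun y => ∑ ν, pdR ν (fun z => θ z * Fstr A z μ ν) y) :=
    fun μ => ContDiff.sum fun ν _ => contDiff_pdR (hg μ ν) ν
  have step1 : ∀ μ, pdC μ (Mflux φ A θ μ) x =
      ((pdR μ (fun y => ∑ ν, pdR ν (fun z => θ z * Fstr A z μ ν) y) x : ℝ) : ℂ) := by
    intro μ
    rw [hMfun μ]
    exact pdC_ofReal ((hs μ).differentiable (by simp) x) μ
  have step2 : ∀ μ, pdR μ (fun y => ∑ ν, pdR ν (fun z => θ z * Fstr A z μ ν) y) x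
      = ∑ ν, pdR μ (pdR ν (fun z => θ z * Fstr A z μ ν)) x := by
    intro μ
    show fderiv ℝ (fun y => ∑ ν, pdR ν (fun z => θ z * Fstr A z μ ν) y) x (Pi.single μ 1) = _
    rw [fderiv_fun_sum (fun ν _ =>
      ((contDiff_pdR (hg μ ν) ν).differentiable (by simp) x)),
      ContinuousLinearMap.sum_apply]
    rfl
  -- the double sum vanishes by antisymmetry
  set D : Fin 4 → Fin 4 → ℝ :=
    fun μ ν => pdR μ (pdR ν (fun z => θ z * Fstr A z μ ν)) x with hD
  have hanti : ∀ μ ν, D ν μ = -D μ ν := by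
    intro μ ν
    have hfun : (fun z => θ z * Fstr A z ν μ) = fun z => -(θ z * Fstr A z μ ν) := by
      funext z
      simp only [Fstr]
      ring
    have : pdR ν (pdR μ (fun z => θ z * Fstr A z ν μ)) x
        = pdR μ (pdR ν (fun z => -(θ z * Fstr A z μ ν))) x := by
      rw [hfun, pdR_comm (hg μ ν).neg μ ν x]
    simp only [hD]
    rw [this]
    have hneg : pdR ν (fun z => -(θ z * Fstr A z μ ν))
        = fun y => -(pdR ν (fun z => θ z * Fstr A z μ ν) y) := by
      funext y
      exact pdR_neg _ ν y
    rw [hneg, pdR_neg (pdR ν (fun z => θ z * Fstr A z μ ν)) μ x]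
  have hsum0 : (∑ μ, ∑ ν, D μ ν) = 0 := by
    have h1 : (∑ μ, ∑ ν, D μ ν) = ∑ μ, ∑ ν, D ν μ := Finset.sum_comm
    have h2 : (∑ μ, ∑ ν, D ν μ) = -∑ μ, ∑ ν, D μ ν := by
      rw [← Finset.sum_neg_distrib]
      refine Finset.sum_congr rfl fun μ _ => ?_
      rw [← Finset.sum_neg_distrib]
      exact Finset.sum_congr rfl fun ν _ => hanti μ ν
    have := h1.trans h2
    linarith
  calc ∑ μ, pdC μ (Mflux φ A θ μ) x
      = ∑ μ, ((∑ ν, D μ ν : ℝ) : ℂ) := by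
        refine Finset.sum_congr rfl fun μ _ => ?_
        rw [step1 μ, step2 μ]
    _ = ((∑ μ, ∑ ν, D μ ν : ℝ) : ℂ) := by push_cast; ring
    _ = 0 := by rw [hsum0]; simp
end
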